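/- Let p, r be positive integers with r ≤ p. Let M ∈ ℝ^{p×r} admit a thin singular value decomposition M = U Σ Wᵀ, where U ∈ St(p,r), W is an r×r orthogonal matrix, and Σ is an r×r diagonal matrix with strictly positive diagonal entries. Then U Wᵀ is the unique minimizer over Y ∈ St(p,r) of the Frobenius distance ‖M − Y‖_F; that is, ‖M − UWᵀ‖_F ≤ ‖M − Y‖_F for all Y ∈ St(p,r), with equality only if Y = UWᵀ. -/

import Mathlib

/-!
For `Y` with orthonormal columns, `‖M - Y‖² = ‖M‖² + r - 2 tr(Mᵀ Y)`, and
`tr(Mᵀ Y) = tr(Σ X)` with `X = Uᵀ Y W`. Since `D = U - Y W` satisfies `DᵀD = 2 - X - Xᵀ`,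
the gap `‖M - Y‖² - ‖M - U Wᵀ‖² = 2 tr Σ - 2 tr(Σ X)` equals `tr(Σ DᵀD) = ∑ᵢ σᵢ ‖Dᵢ‖²`,
a positively weighted sum of the squared column norms of `D`. It is nonnegative and vanishes
only when `D = 0`, i.e. `Y = U Wᵀ`.
-/

open Matrix

attribute [local instance] Matrix.frobeniusNormedAddCommGroup Matrix.frobeniusNormedSpace

namespace Matrix

variable {m n : Type*} [Fintype m] [Fintype n]

theorem frobenius_norm_sq_eq_trace (A : Matrix m n ℝ) : ‖A‖ ^ 2 = trace (Aᵀ * A) := by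
  rw [frobenius_norm_def, ← Real.rpow_natCast, ← Real.rpow_mul (by positivity)]
  norm_num
  rw [Finset.sum_comm]
  simp [trace, mul_apply, sq]

theorem frobenius_norm_sub_sq (A B : Matrix m n ℝ) :
    ‖A - B‖ ^ 2 = ‖A‖ ^ 2 - 2 * trace (Aᵀ * B) + ‖B‖ ^ 2 := by
  have hBA : trace (Bᵀ * A) = trace (Aᵀ * B) := by
    rw [← trace_transpose, transpose_mul, transpose_transpose]
  simp only [frobenius_norm_sq_eq_trace, transpose_sub, Matrix.sub_mul, Matrix.mul_sub,
    trace_sub, hBA]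
  ring

section Stiefel

variable [DecidableEq n]

theorem frobenius_norm_sq_of_transpose_mul_self_eq_one {Y : Matrix m n ℝ}
    (hY : Yᵀ * Y = 1) : ‖Y‖ ^ 2 = Fintype.card n := by
  rw [frobenius_norm_sq_eq_trace, hY, trace_one]

theorem transpose_mul_self_mul_eq_one {Y : Matrix m n ℝ} {V : Matrix n n ℝ}
    (hY : Yᵀ * Y = 1) (hV : Vᵀ * V = 1) : (Y * V)ᵀ * (Y * V) = 1 := by
  rw [transpose_mul, Matrix.mul_assoc, ← Matrix.mul_assoc Yᵀ, hY, Matrix.one_mul, hV]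

theorem trace_diagonal_mul_transpose_mul_self (σ : n → ℝ) (D : Matrix m n ℝ) :
    trace (diagonal σ * (Dᵀ * D)) = ∑ i, σ i * (Dᵀ i ⬝ᵥ Dᵀ i) := by
  simp only [trace, diag, diagonal_mul]
  rfl

theorem trace_diagonal_mul_transpose_mul_self_nonneg {σ : n → ℝ} (hσ : ∀ i, 0 ≤ σ i)
    (D : Matrix m n ℝ) : 0 ≤ trace (diagonal σ * (Dᵀ * D)) := by
  rw [trace_diagonal_mul_transpose_mul_self]
  exact Finset.sum_nonneg fun i _ ↦
    mul_nonneg (hσ i) (Finset.sum_nonneg fun k _ ↦ mul_self_nonneg _)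

theorem trace_diagonal_mul_transpose_mul_self_eq_zero_iff {σ : n → ℝ} (hσ : ∀ i, 0 < σ i)
    {D : Matrix m n ℝ} : trace (diagonal σ * (Dᵀ * D)) = 0 ↔ D = 0 := by
  refine ⟨fun h ↦ ?_, fun h ↦ by simp [h]⟩
  have hterm_nonneg : ∀ i ∈ Finset.univ, 0 ≤ σ i * (Dᵀ i ⬝ᵥ Dᵀ i) := fun i _ ↦
    mul_nonneg (hσ i).le (Finset.sum_nonneg fun k _ ↦ mul_self_nonneg _)
  rw [trace_diagonal_mul_transpose_mul_self, Finset.sum_eq_zero_iff_of_nonneg hterm_nonneg] at h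
  have hcols : Dᵀ = 0 := funext fun i ↦ dotProduct_self_eq_zero.mp
    ((mul_eq_zero.mp (h i (Finset.mem_univ i))).resolve_left (hσ i).ne')
  simpa using congrArg transpose hcols

theorem trace_diagonal_mul_transpose (σ : n → ℝ) (X : Matrix n n ℝ) :
    trace (diagonal σ * Xᵀ) = trace (diagonal σ * X) := by
  rw [← trace_transpose, transpose_mul, transpose_transpose, diagonal_transpose, trace_mul_comm]

variable {U : Matrix m n ℝ} {W : Matrix n n ℝ}

theorem trace_transpose_svd_mul (σ : n → ℝ) (Z : Matrix m n ℝ) :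
    trace ((U * diagonal σ * Wᵀ)ᵀ * Z) = trace (diagonal σ * (Uᵀ * Z * W)) := by
  rw [transpose_mul, transpose_mul, diagonal_transpose, transpose_transpose, Matrix.mul_assoc,
    Matrix.mul_assoc, trace_mul_comm]
  simp only [Matrix.mul_assoc]

theorem transpose_mul_self_sub_mul (hU : Uᵀ * U = 1) (hW : Wᵀ * W = 1) {Y : Matrix m n ℝ}
    (hY : Yᵀ * Y = 1) :
    (U - Y * W)ᵀ * (U - Y * W) = 2 - Uᵀ * Y * W - (Uᵀ * Y * W)ᵀ := by
  rw [transpose_sub, Matrix.sub_mul, Matrix.mul_sub, Matrix.mul_sub, hU,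
    transpose_mul_self_mul_eq_one hY hW, ← one_add_one_eq_two]
  simp only [transpose_mul, transpose_transpose, Matrix.mul_assoc]
  abel

theorem frobenius_norm_svd_sub_sq (σ : n → ℝ) (hU : Uᵀ * U = 1) (hW : Wᵀ * W = 1)
    (hW' : W * Wᵀ = 1) {Y : Matrix m n ℝ} (hY : Yᵀ * Y = 1) :
    ‖U * diagonal σ * Wᵀ - Y‖ ^ 2 =
      ‖U * diagonal σ * Wᵀ - U * Wᵀ‖ ^ 2 +
        trace (diagonal σ * ((U - Y * W)ᵀ * (U - Y * W))) := by
  have hUW : (U * Wᵀ)ᵀ * (U * Wᵀ) = 1 :=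
    transpose_mul_self_mul_eq_one hU (by rwa [transpose_transpose])
  have hfactor : Uᵀ * (U * Wᵀ) * W = 1 := by
    rw [← Matrix.mul_assoc, hU, Matrix.one_mul, hW]
  rw [frobenius_norm_sub_sq, frobenius_norm_sub_sq,
    frobenius_norm_sq_of_transpose_mul_self_eq_one hY,
    frobenius_norm_sq_of_transpose_mul_self_eq_one hUW, trace_transpose_svd_mul,
    trace_transpose_svd_mul, hfactor, transpose_mul_self_sub_mul hU hW hY]
  simp only [Matrix.mul_sub, trace_sub, trace_diagonal_mul_transpose, Matrix.mul_one, mul_two,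
    trace_add]
  ring

end Stiefel

end Matrix

theorem thin_svd_orthogonal_factor_is_unique_projection_general
    (p r : ℕ)
    (M U : Matrix (Fin p) (Fin r) ℝ) (W : Matrix (Fin r) (Fin r) ℝ)
    (σ : Fin r → ℝ)
    (hU : Uᵀ * U = 1) (hW : Wᵀ * W = 1) (hW' : W * Wᵀ = 1)
    (hσ : ∀ i, 0 < σ i)
    (hM : M = U * Matrix.diagonal σ * Wᵀ) :
    (∀ Y : Matrix (Fin p) (Fin r) ℝ, Yᵀ * Y = 1 → ‖M - U * Wᵀ‖ ≤ ‖M - Y‖) ∧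
    (∀ Y : Matrix (Fin p) (Fin r) ℝ, Yᵀ * Y = 1 → ‖M - Y‖ = ‖M - U * Wᵀ‖ → Y = U * Wᵀ) := by
  subst hM
  refine ⟨fun Y hY ↦ ?_, fun Y hY heq ↦ ?_⟩
  · have hgap := trace_diagonal_mul_transpose_mul_self_nonneg (fun i ↦ (hσ i).le) (U - Y * W)
    refine (pow_le_pow_iff_left₀ (norm_nonneg _) (norm_nonneg _) two_ne_zero).mp ?_
    rw [frobenius_norm_svd_sub_sq σ hU hW hW' hY]
    linarith
  · have hgap := frobenius_norm_svd_sub_sq σ hU hW hW' hY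
    rw [heq, left_eq_add, trace_diagonal_mul_transpose_mul_self_eq_zero_iff hσ,
      sub_eq_zero] at hgap
    rw [hgap, Matrix.mul_assoc, hW', Matrix.mul_one]

/-- If `M = U Σ Wᵀ` is a thin SVD (with `U ∈ St(p,r)`, `W` orthogonal, `Σ = diagonal σ`
with strictly positive entries), then `U Wᵀ` is the unique minimizer over `Y ∈ St(p,r)` of
the Frobenius distance `‖M − Y‖_F`. -/
theorem thin_svd_orthogonal_factor_is_unique_projection
    (p r : ℕ) (hp : 0 < p) (hr : 0 < r) (hrp : r ≤ p)
    (M U : Matrix (Fin p) (Fin r) ℝ) (W : Matrix (Fin r) (Fin r) ℝ)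
    (σ : Fin r → ℝ)
    (hU : Uᵀ * U = 1) (hW : Wᵀ * W = 1) (hW' : W * Wᵀ = 1)
    (hσ : ∀ i, 0 < σ i)
    (hM : M = U * Matrix.diagonal σ * Wᵀ) :
    (∀ Y : Matrix (Fin p) (Fin r) ℝ, Yᵀ * Y = 1 → ‖M - U * Wᵀ‖ ≤ ‖M - Y‖) ∧
    (∀ Y : Matrix (Fin p) (Fin r) ℝ, Yᵀ * Y = 1 → ‖M - Y‖ = ‖M - U * Wᵀ‖ → Y = U * Wᵀ) :=
  thin_svd_orthogonal_factor_is_unique_projection_general p r M U W σ hU hW hW' hσ hM
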